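/- arXiv:2002.01080 — 2 statements merged into one kernel-verified Lean document; each statement's English description precedes it below -/
import Mathlib

section
/- Soundness of suboptimality explanations: if for a foil π_f = ⟨a₁,…,a_k⟩ with visited symbolic states s₀,…,s_k there exist concept subsets Ĉᵢ ⊆ s_{i-1} (for i = 1..k) such that Σᵢ C^abs_S(Ĉᵢ, aᵢ) > C(I, π), then the true symbolic cost of the foil, Σᵢ C^ℂ_S(s_{i-1}, aᵢ), strictly exceeds C(I, π); hence the foil is costlier than the plan π. -/
/-- The abstract cost of executing action `a` in the presence of the concept set
`X`: the minimum (infimum) of the symbolic cost over all valid symbolic states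
containing `X`. -/
noncomputable def abstractCost {Conc A : Type}
    (SM : Set (Set Conc)) (Cs : Set Conc → A → ℝ) (X : Set Conc) (a : A) : ℝ :=
  sInf {r : ℝ | ∃ s ∈ SM, X ⊆ s ∧ Cs s a = r}

/-- Finiteness of `Conc` keeps the set of costs finite, hence bounded below; for an unbounded set
`sInf` would be the junk value `0`. -/
theorem abstractCost_le_of_subset {Conc A : Type} [Finite Conc] {SM : Set (Set Conc)}
    {Cs : Set Conc → A → ℝ} {X t : Set Conc} (a : A) (ht : t ∈ SM) (hXt : X ⊆ t) :
    abstractCost SM Cs X a ≤ Cs t a := by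
  have hfin : {r : ℝ | ∃ s ∈ SM, X ⊆ s ∧ Cs s a = r}.Finite :=
    (Set.finite_range fun s => Cs s a).subset (by rintro _ ⟨s, -, -, rfl⟩; exact ⟨s, rfl⟩)
  exact csInf_le hfin.bddBelow ⟨t, ht, hXt, rfl⟩

/-- Soundness of suboptimality explanations: if for a foil
`π_f = ⟨a₁,…,a_k⟩` with visited (valid) symbolic states `s₀,…,s_k` there exist
concept subsets `Chatᵢ ⊆ s_{i-1}` with `Σᵢ C^abs(Chatᵢ, aᵢ) > C(I, π)`, then the true
symbolic cost of the foil `Σᵢ C^ℂ(s_{i-1}, aᵢ)` strictly exceeds `C(I, π)`. -/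
theorem suboptimality_explanation_sound
    {Conc A : Type} [Fintype Conc]
    (SM : Set (Set Conc)) (Cs : Set Conc → A → ℝ)
    (k : ℕ) (s : Fin (k + 1) → Set Conc) (a : Fin k → A)
    (hs : ∀ i, s i ∈ SM)
    (Chat : Fin k → Set Conc)
    (hChat : ∀ i : Fin k, Chat i ⊆ s i.castSucc)
    (Cπ : ℝ)
    (hsum : Cπ < ∑ i : Fin k, abstractCost SM Cs (Chat i) (a i)) :
    Cπ < ∑ i : Fin k, Cs (s i.castSucc) (a i) :=
  hsum.trans_le <| Finset.sum_le_sum fun i _ => abstractCost_le_of_subset (a i) (hs _) (hChat i)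
end

section
/- Greedy cost-search soundness: if the Cost-Function-search procedure returns a list of pairs (Ĉᵢ, kᵢ) with Σᵢ kᵢ > C_π, where each kᵢ is the minimum observed cost of aᵢ over sampled states containing Ĉᵢ and the samples include the true minimizer, so that kᵢ = C^abs_S(Ĉᵢ, aᵢ), and each Ĉᵢ ⊆ s_{i-1}, then the true foil cost Σᵢ C^ℂ_S(s_{i-1}, aᵢ) ≥ Σᵢ C^abs_S(Ĉᵢ, aᵢ) = Σᵢ kᵢ > C_π, so the foil is strictly costlier than the plan. -/
lemma abstractCost_le {Conc A : Type} [Fintype Conc]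
    (SM : Set (Set Conc)) (Cs : Set Conc → A → ℝ) (X : Set Conc) (a : A)
    (t : Set Conc) (ht : t ∈ SM) (hX : X ⊆ t) :
    abstractCost SM Cs X a ≤ Cs t a := by
  have hset : {r : ℝ | ∃ s ∈ SM, X ⊆ s ∧ Cs s a = r}
      = (fun s => Cs s a) '' {s | s ∈ SM ∧ X ⊆ s} := by
    ext r; simp [Set.mem_image, and_assoc]
  have hfin : {r : ℝ | ∃ s ∈ SM, X ⊆ s ∧ Cs s a = r}.Finite := by
    rw [hset]
    exact (Set.toFinite _).image _
  exact csInf_le hfin.bddBelow ⟨t, ht, hX, rfl⟩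

/-- Greedy cost-search soundness: if Cost-Function-search returns
pairs `(Ĉᵢ, kᵢ)` with `Σᵢ kᵢ > C_π`, where sampling is exhaustive enough that each
reported `kᵢ` equals the abstract cost `C^abs(Ĉᵢ, aᵢ)`, and each `Ĉᵢ ⊆ s_{i-1}`
(the visited valid symbolic states of the foil), then the true foil cost satisfies
`Σᵢ C^ℂ(s_{i-1}, aᵢ) ≥ Σᵢ C^abs(Ĉᵢ, aᵢ) = Σᵢ kᵢ > C_π`: the foil is strictly
costlier than the plan. -/
theorem greedy_cost_search_sound
    {Conc A : Type} [Fintype Conc]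
    (SM : Set (Set Conc)) (Cs : Set Conc → A → ℝ)
    (k : ℕ) (s : Fin (k + 1) → Set Conc) (a : Fin k → A)
    (hs : ∀ i, s i ∈ SM)
    (Chat : Fin k → Set Conc) (kost : Fin k → ℝ)
    (hChat : ∀ i : Fin k, Chat i ⊆ s i.castSucc)
    (hkeq : ∀ i : Fin k, kost i = abstractCost SM Cs (Chat i) (a i))
    (Cπ : ℝ)
    (hsum : Cπ < ∑ i : Fin k, kost i) :
    (∑ i : Fin k, kost i ≤ ∑ i : Fin k, Cs (s i.castSucc) (a i)) ∧
    Cπ < ∑ i : Fin k, Cs (s i.castSucc) (a i) := by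
  have hle : ∑ i : Fin k, kost i ≤ ∑ i : Fin k, Cs (s i.castSucc) (a i) := by
    apply Finset.sum_le_sum
    intro i _
    rw [hkeq i]
    exact abstractCost_le SM Cs (Chat i) (a i) _ (hs _) (hChat i)
  exact ⟨hle, lt_of_lt_of_le hsum hle⟩
end
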